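/- arXiv:2103.07967 — 6 statements merged into one kernel-verified Lean document; each statement's English description precedes it below -/
import Mathlib

section
/- For all integers m > n ≥ 1 and every integer a ≥ 2, the greatest common divisor of Φ_m(a) and Φ_n(a) divides m, where Φ_k denotes the k-th cyclotomic polynomial. -/
/-!
Let `d = gcd(m, n)`, a proper divisor of `m`, and `g` the gcd in question. Since `Φ_m` and `Φ_n`
divide `X^m - 1` and `X^n - 1`, `g` divides `a^d - 1`. Since `(X^d - 1) Φ_m ∣ X^m - 1`, `Φ_m(a)`, and
hence `g`, divides `(a^m - 1)/(a^d - 1) = ∑_{i < m/d} (a^d)^i`, which is `≡ m/d (mod a^d - 1)`.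
So `g ∣ m/d ∣ m`.
-/

open Polynomial Finset

theorem dvd_pow_gcd_sub_one {R : Type*} [CommRing R] {p x : R} {m n : ℕ}
    (hm : p ∣ x ^ m - 1) (hn : p ∣ x ^ n - 1) : p ∣ x ^ m.gcd n - 1 := by
  simp only [← Ideal.mem_span_singleton, ← Ideal.Quotient.eq, map_pow, map_one] at hm hn ⊢
  exact pow_gcd_eq_one.2 ⟨hm, hn⟩

theorem dvd_geom_sum_iff_of_dvd_sub_one {R : Type*} [CommRing R] {p x : R} {k : ℕ}
    (h : p ∣ x - 1) : p ∣ ∑ i ∈ range k, x ^ i ↔ p ∣ (k : R) := by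
  simpa using dvd_geom_sum₂_iff_of_dvd_sub (n := k) h

theorem Polynomial.eval_cyclotomic_dvd_pow_sub_one {R : Type*} [CommRing R] (n : ℕ) (x : R) :
    (cyclotomic n R).eval x ∣ x ^ n - 1 := by
  simpa using eval_dvd (x := x) (cyclotomic.dvd_X_pow_sub_one n R)

theorem Polynomial.cyclotomic_dvd_geom_sum_X_pow_of_mem_properDivisors (R : Type*) [CommRing R]
    {d n : ℕ} (h : d ∈ n.properDivisors) :
    cyclotomic n R ∣ ∑ i ∈ range (n / d), (X ^ d) ^ i := by
  have hmonic : (X ^ d - 1 : R[X]).Monic :=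
    monic_X_pow_sub_C 1 (Nat.pos_of_mem_properDivisors h).ne'
  rw [← dvd_cancel_left_mem_nonZeroDivisors hmonic.mem_nonZeroDivisors, mul_geom_sum, ← pow_mul,
    Nat.mul_div_cancel' (Nat.mem_properDivisors.1 h).1]
  exact X_pow_sub_one_mul_cyclotomic_dvd_X_pow_sub_one_of_dvd R h

theorem stmt_0_general (a : ℤ) (m n : ℕ) (hn : 1 ≤ n) (hmn : n < m) :
    (Int.gcd ((Polynomial.cyclotomic m ℤ).eval a) ((Polynomial.cyclotomic n ℤ).eval a)) ∣ m := by
  set g := Int.gcd ((cyclotomic m ℤ).eval a) ((cyclotomic n ℤ).eval a)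
  have hd : m.gcd n ∈ m.properDivisors :=
    Nat.mem_properDivisors.2 ⟨m.gcd_dvd_left n, (Nat.gcd_le_right m hn).trans_lt hmn⟩
  have hgm : (g : ℤ) ∣ (cyclotomic m ℤ).eval a := Int.gcd_dvd_left _ _
  have hgn : (g : ℤ) ∣ (cyclotomic n ℤ).eval a := Int.gcd_dvd_right _ _
  have hg_sub : (g : ℤ) ∣ a ^ m.gcd n - 1 :=
    dvd_pow_gcd_sub_one (hgm.trans (eval_cyclotomic_dvd_pow_sub_one m a))
      (hgn.trans (eval_cyclotomic_dvd_pow_sub_one n a))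
  have hg_sum : (g : ℤ) ∣ ∑ i ∈ range (m / m.gcd n), (a ^ m.gcd n) ^ i :=
    hgm.trans <| by
      simpa [eval_finsetSum] using
        eval_dvd (x := a) (cyclotomic_dvd_geom_sum_X_pow_of_mem_properDivisors ℤ hd)
  have hg_quot : g ∣ m / m.gcd n :=
    Int.natCast_dvd_natCast.1 ((dvd_geom_sum_iff_of_dvd_sub_one hg_sub).1 hg_sum)
  exact hg_quot.trans (Nat.div_dvd_of_dvd (m.gcd_dvd_left n))

theorem stmt_0 (a : ℤ) (ha : 2 ≤ a) (m n : ℕ) (hn : 1 ≤ n) (hmn : n < m) :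
    (Int.gcd ((Polynomial.cyclotomic m ℤ).eval a) ((Polynomial.cyclotomic n ℤ).eval a)) ∣ m :=
  stmt_0_general a m n hn hmn
end

section
/- There is an absolute constant C > 0 such that for every integer n ≥ 1, the sum of gcd(d₁, d₂) over all pairs of positive integers (d₁, d₂) with lcm(d₁, d₂) ≤ n is at most C · n². -/
open Finset

lemma aux_sum_inv_sq (n : ℕ) : ∑ a ∈ Icc 1 n, (1 / (a:ℝ)^2) ≤ 2 := by
  have h : ∀ m : ℕ, ∑ a ∈ Icc 1 m, (1 / (a:ℝ)^2) ≤ 2 - 1 / (m:ℝ) := by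
    intro m
    induction m with
    | zero => simp
    | succ k ih =>
      rcases Nat.eq_zero_or_pos k with hk | hk
      · subst hk; norm_num
      · rw [← Finset.insert_Icc_right_eq_Icc_add_one (by omega), Finset.sum_insert (by simp)]
        have hk1 : (0:ℝ) < k := by exact_mod_cast hk
        have h2 : (1:ℝ) / ((k:ℝ)+1)^2 ≤ 1 / (k:ℝ) - 1 / ((k:ℝ)+1) := by
          rw [div_sub_div _ _ (ne_of_gt hk1) (by positivity)]
          rw [div_le_div_iff₀ (by positivity) (by positivity)]
          nlinarith
        push_cast
        linarith
  calc ∑ a ∈ Icc 1 n, (1 / (a:ℝ)^2) ≤ 2 - 1 / (n:ℝ) := h n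
    _ ≤ 2 := by
        rcases Nat.eq_zero_or_pos n with hn | hn
        · simp [hn]
        · have h1 : (0:ℝ) < n := by exact_mod_cast hn
          have : (0:ℝ) ≤ 1 / (n:ℝ) := by positivity
          linarith

theorem stmt_5 :
    ∃ C : ℝ, 0 < C ∧ ∀ n : ℕ, 1 ≤ n →
      (∑ p ∈ ((Finset.Icc 1 n) ×ˢ (Finset.Icc 1 n)).filter
          (fun p => Nat.lcm p.1 p.2 ≤ n), (Nat.gcd p.1 p.2 : ℝ))
        ≤ C * (n : ℝ) ^ 2 := by
  refine ⟨4, by norm_num, fun n hn => ?_⟩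
  set S := ((Finset.Icc 1 n) ×ˢ (Finset.Icc 1 n)).filter
      (fun p => Nat.lcm p.1 p.2 ≤ n) with hS
  set T := ((Icc 1 n) ×ˢ ((Icc 1 n) ×ˢ (Icc 1 n))).filter
      (fun t : ℕ × ℕ × ℕ => t.1 * t.2.1 * t.2.2 ≤ n) with hT
  set i : ℕ × ℕ → ℕ × ℕ × ℕ :=
    fun p => (p.1 / Nat.gcd p.1 p.2, p.2 / Nat.gcd p.1 p.2, Nat.gcd p.1 p.2) with hi
  -- basic facts about points of S
  have hmem : ∀ p ∈ S, 1 ≤ p.1 ∧ p.1 ≤ n ∧ 1 ≤ p.2 ∧ p.2 ≤ n ∧ Nat.lcm p.1 p.2 ≤ n := by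
    intro p hp
    simp only [hS, mem_filter, mem_product, mem_Icc] at hp
    tauto
  have hinj : Set.InjOn i S := by
    intro p hp q hq hpq
    obtain ⟨hp1, -, hp2, -, -⟩ := hmem p hp
    obtain ⟨hq1, -, hq2, -, -⟩ := hmem q hq
    have hgp : 0 < Nat.gcd p.1 p.2 := Nat.gcd_pos_of_pos_left _ hp1
    have e1 : (i p).2.2 = (i q).2.2 := by rw [hpq]
    have e2 : (i p).1 = (i q).1 := by rw [hpq]
    have e3 : (i p).2.1 = (i q).2.1 := by rw [hpq]
    simp only [hi] at e1 e2 e3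
    have r1 : p.1 = q.1 := by
      have := congrArg (· * Nat.gcd p.1 p.2) e2
      rwa [Nat.div_mul_cancel (Nat.gcd_dvd_left _ _), e1,
        Nat.div_mul_cancel (Nat.gcd_dvd_left _ _)] at this
    have r2 : p.2 = q.2 := by
      have := congrArg (· * Nat.gcd p.1 p.2) e3
      rwa [Nat.div_mul_cancel (Nat.gcd_dvd_right _ _), e1,
        Nat.div_mul_cancel (Nat.gcd_dvd_right _ _)] at this
    exact Prod.ext r1 r2
  have hmaps : ∀ p ∈ S, i p ∈ T := by
    intro p hp
    obtain ⟨hp1, hp1n, hp2, hp2n, hl⟩ := hmem p hp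
    set g := Nat.gcd p.1 p.2 with hg
    have hgpos : 0 < g := Nat.gcd_pos_of_pos_left _ hp1
    have ha1 : p.1 / g * g = p.1 := Nat.div_mul_cancel (Nat.gcd_dvd_left _ _)
    have hb1 : p.2 / g * g = p.2 := Nat.div_mul_cancel (Nat.gcd_dvd_right _ _)
    have key : (p.1 / g) * (p.2 / g) * g = Nat.lcm p.1 p.2 := by
      have h1 : g * ((p.1 / g) * (p.2 / g) * g) = g * Nat.lcm p.1 p.2 := by
        rw [Nat.gcd_mul_lcm]
        calc g * ((p.1 / g) * (p.2 / g) * g) = (p.1 / g * g) * (p.2 / g * g) := by ring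
          _ = p.1 * p.2 := by rw [ha1, hb1]
      exact Nat.eq_of_mul_eq_mul_left hgpos h1
    simp only [hT, hi, mem_filter, mem_product, mem_Icc]
    refine ⟨⟨⟨?_, ?_⟩, ⟨?_, ?_⟩, ?_, ?_⟩, ?_⟩
    · exact Nat.one_le_div_iff hgpos |>.2 (Nat.le_of_dvd hp1 (Nat.gcd_dvd_left _ _))
    · exact le_trans (Nat.div_le_self _ _) hp1n
    · exact Nat.one_le_div_iff hgpos |>.2 (Nat.le_of_dvd hp2 (Nat.gcd_dvd_right _ _))
    · exact le_trans (Nat.div_le_self _ _) hp2n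
    · exact hgpos
    · exact le_trans (Nat.le_of_dvd hp1 (Nat.gcd_dvd_left _ _)) hp1n
    · rw [key]; exact hl
  -- step 1: sum over S ≤ sum over T of (t.2.2 : ℝ)
  have step1 : (∑ p ∈ S, (Nat.gcd p.1 p.2 : ℝ)) ≤ ∑ t ∈ T, ((t.2.2 : ℕ) : ℝ) := by
    have himg : ∑ p ∈ S, (Nat.gcd p.1 p.2 : ℝ) = ∑ t ∈ S.image i, ((t.2.2 : ℕ) : ℝ) := by
      rw [Finset.sum_image (fun p hp q hq h => hinj hp hq h)]
    rw [himg]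
    apply Finset.sum_le_sum_of_subset_of_nonneg
    · intro t ht
      obtain ⟨p, hp, rfl⟩ := Finset.mem_image.1 ht
      exact hmaps p hp
    · intro t _ _; positivity
  -- step 2: bound sum over T
  have step2 : (∑ t ∈ T, ((t.2.2 : ℕ) : ℝ)) ≤ 4 * (n:ℝ)^2 := by
    rw [hT, Finset.sum_filter, Finset.sum_product]
    have inner : ∀ a ∈ Icc 1 n, (∑ t ∈ (Icc 1 n) ×ˢ (Icc 1 n),
        if a * t.1 * t.2 ≤ n then ((t.2 : ℕ) : ℝ) else 0)
        ≤ ∑ b ∈ Icc 1 n, (n:ℝ)^2 * (1 / (a:ℝ)^2) * (1 / (b:ℝ)^2) := by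
      intro a ha
      rw [Finset.sum_product]
      apply Finset.sum_le_sum
      intro b hb
      simp only [mem_Icc] at ha hb
      have hab : 0 < a * b := Nat.mul_pos (by omega) (by omega)
      have hfilter : (Icc 1 n).filter (fun g => a * b * g ≤ n) = Icc 1 (n / (a*b)) := by
        ext g
        simp only [mem_filter, mem_Icc]
        constructor
        · rintro ⟨⟨h1, h2⟩, h3⟩
          exact ⟨h1, (Nat.le_div_iff_mul_le hab).2 (by rw [mul_comm]; exact h3)⟩
        · rintro ⟨h1, h2⟩
          have h3 : g * (a*b) ≤ n := (Nat.le_div_iff_mul_le hab).1 h2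
          have hgn : g ≤ n := le_trans (Nat.le_mul_of_pos_right g hab) h3
          exact ⟨⟨h1, hgn⟩, by rw [mul_comm] at h3; exact h3⟩
      have hsum : (∑ g ∈ Icc 1 n, if a * b * g ≤ n then ((g:ℕ):ℝ) else 0)
          = ∑ g ∈ Icc 1 (n/(a*b)), ((g:ℕ):ℝ) := by
        rw [← Finset.sum_filter, hfilter]
      rw [hsum]
      set m := n / (a*b) with hm
      have hcard : (Icc 1 m).card = m := by simp
      have hle : (∑ g ∈ Icc 1 m, ((g:ℕ):ℝ)) ≤ (m:ℝ) * m := by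
        calc (∑ g ∈ Icc 1 m, ((g:ℕ):ℝ)) ≤ ∑ g ∈ Icc 1 m, (m:ℝ) := by
              apply Finset.sum_le_sum
              intro g hg
              simp only [mem_Icc] at hg
              exact_mod_cast hg.2
          _ = (m:ℝ) * m := by rw [Finset.sum_const, hcard]; push_cast; ring
      have hmn : (m:ℝ) ≤ (n:ℝ) / ((a:ℝ) * (b:ℝ)) := by
        have := Nat.cast_div_le (α := ℝ) (m := n) (n := a*b)
        rw [hm]; push_cast at this ⊢; exact this
      have habR : (0:ℝ) < (a:ℝ) * (b:ℝ) := by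
        have : (0:ℝ) < ((a*b : ℕ):ℝ) := by exact_mod_cast hab
        push_cast at this; exact this
      have hm0 : (0:ℝ) ≤ (m:ℝ) := by positivity
      calc (∑ g ∈ Icc 1 m, ((g:ℕ):ℝ)) ≤ (m:ℝ) * m := hle
        _ ≤ ((n:ℝ) / ((a:ℝ)*(b:ℝ))) * ((n:ℝ) / ((a:ℝ)*(b:ℝ))) :=
            mul_le_mul hmn hmn hm0 (le_trans hm0 hmn)
        _ = (n:ℝ)^2 * (1 / (a:ℝ)^2) * (1 / (b:ℝ)^2) := by
            have haR : ((a:ℝ)) ≠ 0 := by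
              have : (0:ℝ) < a := by exact_mod_cast ha.1
              linarith
            have hbR : ((b:ℝ)) ≠ 0 := by
              have : (0:ℝ) < b := by exact_mod_cast hb.1
              linarith
            field_simp
    calc (∑ a ∈ Icc 1 n, ∑ t ∈ (Icc 1 n) ×ˢ (Icc 1 n),
          if a * t.1 * t.2 ≤ n then ((t.2 : ℕ) : ℝ) else 0)
        ≤ ∑ a ∈ Icc 1 n, ∑ b ∈ Icc 1 n, (n:ℝ)^2 * (1 / (a:ℝ)^2) * (1 / (b:ℝ)^2) :=
          Finset.sum_le_sum inner
      _ = (n:ℝ)^2 * ((∑ a ∈ Icc 1 n, 1 / (a:ℝ)^2) * (∑ b ∈ Icc 1 n, 1 / (b:ℝ)^2)) := by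
          rw [Finset.sum_mul_sum, Finset.mul_sum]
          apply Finset.sum_congr rfl
          intro a _
          rw [Finset.mul_sum]
          apply Finset.sum_congr rfl
          intro b _
          ring
      _ ≤ (n:ℝ)^2 * 2 * 2 := by
          have h1 := aux_sum_inv_sq n
          have hnn : (0:ℝ) ≤ (n:ℝ)^2 := by positivity
          have hs : (0:ℝ) ≤ ∑ a ∈ Icc 1 n, 1 / (a:ℝ)^2 := by
            apply Finset.sum_nonneg; intro a _; positivity
          have hss : (∑ a ∈ Icc 1 n, 1 / (a:ℝ)^2) * (∑ b ∈ Icc 1 n, 1 / (b:ℝ)^2) ≤ 4 := by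
            nlinarith
          nlinarith
      _ = 4 * (n:ℝ)^2 := by ring
  exact le_trans step1 step2
end

section
/- Let n ≥ 1 be an integer and let (s_k)_{k≥1} be a sequence of independent random variables, each uniformly distributed on {−1, +1}. For a positive integer k, let D⁻(k) be the set of divisors of k and let D⁺(k) be the set of divisors of 2k that do not divide k. For a positive integer d, let I(n, d) be the indicator of the event that d belongs to the union over k ≤ n of D^{(s_k)}(k). Then E[I(n, d)] = 1 − 2^{−⌊n·gcd(2,d)/d⌋}. -/
open MeasureTheory ProbabilityTheory

/-- `d ∈ L_s(n)(ω)`: there is `k ≤ n` with `d ∈ D^{(s_k)}(k)`, where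
`D⁻(k)` is the set of divisors of `k` and `D⁺(k)` is the set of divisors
of `2k` not dividing `k`. -/
def memL {Ω : Type*} (s : ℕ → Ω → ℤ) (n d : ℕ) (ω : Ω) : Prop :=
  ∃ k ∈ Finset.Icc 1 n,
    if s k ω = -1 then d ∣ k else (d ∣ 2 * k ∧ ¬ d ∣ k)

theorem stmt_10 {Ω : Type*} [MeasurableSpace Ω] (μ : Measure Ω)
    [IsProbabilityMeasure μ] (s : ℕ → Ω → ℤ)
    (hmeas : ∀ k, Measurable (s k))
    (hrange : ∀ k ω, s k ω = -1 ∨ s k ω = 1)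
    (hindep : iIndepFun s μ)
    (hunif : ∀ k, μ {ω | s k ω = 1} = 1 / 2)
    (n d : ℕ) (hn : 1 ≤ n) (hd : 1 ≤ d) :
    (μ {ω | memL s n d ω}).toReal = 1 - (1 / 2 : ℝ) ^ (n * Nat.gcd 2 d / d) := by
  classical
  set m := n * Nat.gcd 2 d / d with hm
  set K : Finset ℕ := (Finset.Icc 1 n).filter (fun k => d ∣ 2 * k) with hK
  set c : ℕ → ℤ := fun k => if d ∣ k then 1 else -1 with hc
  -- each value has probability 1/2
  have hhalf : ∀ (k : ℕ) (v : ℤ), v = 1 ∨ v = -1 → μ {ω | s k ω = v} = 1 / 2 := by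
    intro k v hv
    rcases hv with rfl | rfl
    · exact hunif k
    · have hset : {ω | s k ω = -1} = {ω | s k ω = 1}ᶜ := by
        ext ω
        simp only [Set.mem_setOf_eq, Set.mem_compl_iff]
        constructor
        · intro h h1; rw [h1] at h; norm_num at h
        · intro h; rcases hrange k ω with h' | h'
          · exact h'
          · exact absurd h' h
      have hms : MeasurableSet {ω | s k ω = 1} := (hmeas k) (measurableSet_singleton 1)
      rw [hset, measure_compl hms (measure_ne_top _ _), hunif k, measure_univ]
      exact ENNReal.sub_half ENNReal.one_ne_top
  -- complement description
  have hcompl : {ω | memL s n d ω}ᶜ = ⋂ k ∈ K, {ω | s k ω = c k} := by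
    ext ω
    simp only [Set.mem_compl_iff, Set.mem_setOf_eq, memL, Set.mem_iInter]
    constructor
    · intro h k hk
      push_neg at h
      simp only [hK, Finset.mem_filter] at hk
      obtain ⟨hk1, hk2⟩ := hk
      have h' := h k hk1
      rcases hrange k ω with hs' | hs'
      · rw [if_pos hs'] at h'
        simp only [hc, if_neg h', hs']
      · have hne : s k ω ≠ -1 := by rw [hs']; norm_num
        rw [if_neg hne] at h'
        push_neg at h'
        have hdk : d ∣ k := h' hk2
        simp only [hc, if_pos hdk, hs']
    · intro h h'
      obtain ⟨k, hk1, hk2⟩ := h'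
      by_cases hdd : d ∣ 2 * k
      · have hkK : k ∈ K := by simp only [hK, Finset.mem_filter]; exact ⟨hk1, hdd⟩
        have hv := h k hkK
        by_cases hdk : d ∣ k
        · simp only [hc, if_pos hdk] at hv
          have hne : s k ω ≠ -1 := by rw [hv]; norm_num
          rw [if_neg hne] at hk2
          exact hk2.2 hdk
        · simp only [hc, if_neg hdk] at hv
          rw [if_pos hv] at hk2
          exact hdk hk2
      · rcases hrange k ω with hs' | hs'
        · rw [if_pos hs'] at hk2
          exact hdd (hk2.mul_left 2)
        · have hne : s k ω ≠ -1 := by rw [hs']; norm_num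
          rw [if_neg hne] at hk2
          exact hdd hk2.1
  -- probability of the intersection
  have hinter : μ (⋂ k ∈ K, {ω | s k ω = c k}) = (1 / 2 : ENNReal) ^ K.card := by
    have hme : ∀ k ∈ K, MeasurableSet[MeasurableSpace.comap (s k) inferInstance]
        {ω | s k ω = c k} :=
      fun k _ => ⟨Set.singleton (c k), measurableSet_singleton _, rfl⟩
    rw [hindep.meas_biInter hme]
    rw [Finset.prod_congr rfl (fun k _ => hhalf k (c k) (by
      by_cases hdk : d ∣ k <;> simp [hc, hdk]))]
    simp
  -- cardinality of K
  have hcard : K.card = m := by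
    rcases Nat.even_or_odd d with he | ho
    · obtain ⟨e, rfl⟩ := he
      have hd2 : e + e = 2 * e := by ring
      have hg : Nat.gcd 2 (e + e) = 2 := Nat.gcd_eq_left ⟨e, hd2⟩
      have hfil : K = (Finset.Ioc 0 n).filter (fun k => e ∣ k) := by
        rw [hK]
        have : Finset.Icc 1 n = Finset.Ioc 0 n := rfl
        rw [this]
        apply Finset.filter_congr
        intro k _
        rw [hd2]
        simp [mul_dvd_mul_iff_left (two_ne_zero (α := ℕ))]
      rw [hfil, Nat.Ioc_filter_dvd_card_eq_div, hm, hg, hd2]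
      rw [mul_comm n 2, Nat.mul_div_mul_left _ _ (by norm_num)]
    · have hg : Nat.gcd 2 d = 1 := ho.coprime_two_left
      have hfil : K = (Finset.Ioc 0 n).filter (fun k => d ∣ k) := by
        rw [hK]
        have : Finset.Icc 1 n = Finset.Ioc 0 n := rfl
        rw [this]
        apply Finset.filter_congr
        intro k _
        constructor
        · intro hdvd
          exact Nat.Coprime.dvd_of_dvd_mul_left ho.coprime_two_left.symm hdvd
        · exact fun hdvd => hdvd.mul_left 2
      rw [hfil, Nat.Ioc_filter_dvd_card_eq_div, hm, hg, mul_one]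
  -- measurability of the event
  have hmeasE : MeasurableSet {ω | memL s n d ω} := by
    have h1 : MeasurableSet (⋂ k ∈ K, {ω | s k ω = c k}) :=
      MeasurableSet.biInter (Set.to_countable _)
        (fun k _ => (hmeas k) (measurableSet_singleton (c k)))
    have := h1.compl
    rwa [← hcompl, compl_compl] at this
  -- conclude
  have hcomplval : μ {ω | memL s n d ω}ᶜ = (1 / 2 : ENNReal) ^ m := by
    rw [hcompl, hinter, hcard]
  have hval : μ {ω | memL s n d ω} = 1 - (1 / 2 : ENNReal) ^ m := by
    have := measure_compl hmeasE (measure_ne_top μ _)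
    rw [hcomplval, measure_univ] at this
    rw [this]
    exact (ENNReal.sub_sub_cancel ENNReal.one_ne_top prob_le_one).symm
  rw [hval, ENNReal.toReal_sub_of_le (by exact pow_le_one' ENNReal.half_le_self m) ENNReal.one_ne_top]
  simp [ENNReal.toReal_pow]
end

section
/- With notation as follows: (s_k)_{k≥1} i.i.d. uniform on {−1,+1}, D⁻(k) the divisors of k, D⁺(k) the divisors of 2k not dividing k, L_s(n) = ⋃_{k≤n} D^{(s_k)}(k), and I(n,d) the indicator that d ∈ L_s(n). If d₁, d₂ are positive integers with lcm(d₁,d₂) ≤ 2n and ν₂(d₁) ≠ ν₂(d₂) (different 2-adic valuations), then the probability that d₁ ∉ L_s(n) and d₂ ∉ L_s(n) is zero; equivalently, almost surely at least one of d₁, d₂ belongs to L_s(n). -/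
/-!
The event has probability zero because it is empty. Say `ν₂(d₁) < ν₂(d₂)` and let
`k = lcm(d₁, d₂) / 2`, so `k ≤ n`. Then `d₁ ∣ k` (as `ν₂(lcm(d₁, d₂)) ≥ ν₂(d₂) > ν₂(d₁)`),
`d₂ ∣ 2k`, and `d₂ ∤ k` (otherwise `lcm(d₁, d₂) ∣ k`). Whatever the sign `s_k` is,
`d₁ ∈ D⁻(k)` or `d₂ ∈ D⁺(k)`.
-/

open MeasureTheory ProbabilityTheory

theorem Nat.dvd_of_dvd_prime_mul_of_factorization_le {p d k : ℕ} (hp : p.Prime) (hk : k ≠ 0)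
    (hd : d ∣ p * k) (hle : d.factorization p ≤ k.factorization p) : d ∣ k := by
  have hpk : p * k ≠ 0 := mul_ne_zero hp.ne_zero hk
  have hd0 : d ≠ 0 := ne_zero_of_dvd_ne_zero hpk hd
  rw [← Nat.factorization_le_iff_dvd hd0 hk]
  intro q
  rcases eq_or_ne q p with rfl | hq
  · exact hle
  · simpa [Nat.factorization_mul hp.ne_zero hk, hp.factorization, Finsupp.single_apply,
      hq.symm] using (Nat.factorization_le_iff_dvd hd0 hpk).mpr hd q

theorem Nat.exists_dvd_and_dvd_two_mul_and_not_dvd {n d₁ d₂ : ℕ} (hd₁ : d₁ ≠ 0) (hd₂ : d₂ ≠ 0)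
    (hlcm : d₁.lcm d₂ ≤ 2 * n) (hval : d₁.factorization 2 < d₂.factorization 2) :
    ∃ k ∈ Finset.Icc 1 n, d₁ ∣ k ∧ d₂ ∣ 2 * k ∧ ¬ d₂ ∣ k := by
  have hL : d₁.lcm d₂ ≠ 0 := Nat.lcm_ne_zero hd₁ hd₂
  have hd₂L : d₂.factorization 2 ≤ (d₁.lcm d₂).factorization 2 :=
    (Nat.factorization_le_iff_dvd hd₂ hL).mpr (Nat.dvd_lcm_right _ _) 2
  obtain ⟨k, hk⟩ : 2 ∣ d₁.lcm d₂ :=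
    (Nat.dvd_of_factorization_pos (by omega)).trans (Nat.dvd_lcm_right _ _)
  have hk0 : k ≠ 0 := by rintro rfl; exact hL hk
  have hLk : (d₁.lcm d₂).factorization 2 = 1 + k.factorization 2 := by
    simp [hk, Nat.factorization_mul two_ne_zero hk0, Nat.prime_two.factorization_self]
  have hd₁k : d₁ ∣ k :=
    Nat.dvd_of_dvd_prime_mul_of_factorization_le Nat.prime_two hk0
      (hk ▸ Nat.dvd_lcm_left _ _) (by omega)
  have hd₂k : ¬ d₂ ∣ k := fun h ↦ by
    have := Nat.le_of_dvd (Nat.pos_of_ne_zero hk0) (Nat.lcm_dvd hd₁k h)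
    omega
  exact ⟨k, Finset.mem_Icc.mpr ⟨by omega, by omega⟩, hd₁k, hk ▸ Nat.dvd_lcm_right _ _, hd₂k⟩

theorem memL_or_memL_of_factorization_lt {Ω : Type*} (s : ℕ → Ω → ℤ) (ω : Ω) {n d₁ d₂ : ℕ}
    (hd₁ : d₁ ≠ 0) (hd₂ : d₂ ≠ 0) (hlcm : d₁.lcm d₂ ≤ 2 * n)
    (hval : d₁.factorization 2 < d₂.factorization 2) :
    memL s n d₁ ω ∨ memL s n d₂ ω := by
  obtain ⟨k, hk, hd₁k, hd₂2k, hd₂k⟩ :=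
    Nat.exists_dvd_and_dvd_two_mul_and_not_dvd hd₁ hd₂ hlcm hval
  by_cases hs : s k ω = -1
  · exact .inl ⟨k, hk, by simpa [hs] using hd₁k⟩
  · exact .inr ⟨k, hk, by simpa [hs] using ⟨hd₂2k, hd₂k⟩⟩

theorem stmt_11_general {Ω : Type*} [MeasurableSpace Ω] (μ : Measure Ω)
    (s : ℕ → Ω → ℤ)
    (n d₁ d₂ : ℕ) (hd₁ : 1 ≤ d₁) (hd₂ : 1 ≤ d₂)
    (hlcm : Nat.lcm d₁ d₂ ≤ 2 * n)
    (hval : padicValNat 2 d₁ ≠ padicValNat 2 d₂) :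
    μ {ω | ¬ memL s n d₁ ω ∧ ¬ memL s n d₂ ω} = 0 := by
  have hd₁0 : d₁ ≠ 0 := Nat.one_le_iff_ne_zero.mp hd₁
  have hd₂0 : d₂ ≠ 0 := Nat.one_le_iff_ne_zero.mp hd₂
  have hfac : d₁.factorization 2 ≠ d₂.factorization 2 := by
    simpa [Nat.factorization_def _ Nat.prime_two] using hval
  have hcover (ω : Ω) : memL s n d₁ ω ∨ memL s n d₂ ω := by
    rcases hfac.lt_or_gt with h | h
    · exact memL_or_memL_of_factorization_lt s ω hd₁0 hd₂0 hlcm h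
    · exact (memL_or_memL_of_factorization_lt s ω hd₂0 hd₁0 (Nat.lcm_comm d₁ d₂ ▸ hlcm) h).symm
  have hempty : {ω | ¬ memL s n d₁ ω ∧ ¬ memL s n d₂ ω} = ∅ :=
    Set.eq_empty_iff_forall_notMem.mpr fun ω ⟨h₁, h₂⟩ ↦ (hcover ω).elim h₁ h₂
  rw [hempty, measure_empty]

theorem stmt_11 {Ω : Type*} [MeasurableSpace Ω] (μ : Measure Ω)
    [IsProbabilityMeasure μ] (s : ℕ → Ω → ℤ)
    (hmeas : ∀ k, Measurable (s k))
    (hrange : ∀ k ω, s k ω = -1 ∨ s k ω = 1)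
    (hindep : iIndepFun s μ)
    (hunif : ∀ k, μ {ω | s k ω = 1} = 1 / 2)
    (n d₁ d₂ : ℕ) (hn : 1 ≤ n) (hd₁ : 1 ≤ d₁) (hd₂ : 1 ≤ d₂)
    (hlcm : Nat.lcm d₁ d₂ ≤ 2 * n)
    (hval : padicValNat 2 d₁ ≠ padicValNat 2 d₂) :
    μ {ω | ¬ memL s n d₁ ω ∧ ¬ memL s n d₂ ω} = 0 :=
  stmt_11_general μ s n d₁ d₂ hd₁ hd₂ hlcm hval
end

section
/- With (s_k) i.i.d. uniform on {−1,+1}, and I(n,d) the indicator that d ∈ L_s(n) := ⋃_{k≤n} D^{(s_k)}(k) (where D⁻(k) = divisors of k, D⁺(k) = divisors of 2k not dividing k): if d₁, d₂ are positive integers with ν₂(d₁) = ν₂(d₂), then E[I(n,d₁)I(n,d₂)] = 1 − 2^{−⌊n(2,d₁)/d₁⌋} − 2^{−⌊n(2,d₂)/d₂⌋} + 2^{−⌊n(2,d₁)/d₁⌋ − ⌊n(2,d₂)/d₂⌋ + ⌊n(2,[d₁,d₂])/[d₁,d₂]⌋}, where (2,d) = gcd(2,d) and [d₁,d₂] = lcm(d₁,d₂).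 -/
/-!
For `d ∣ 2k` exactly one value of `s_k` puts `d` into `D^{(s_k)}(k)`, and for `d ∤ 2k` neither does.
So `d ∉ L_s(n)` is the event that the `⌊n(2,d)/d⌋` signs `s_k` with `k ≤ n`, `d ∣ 2k` all take the
other value, which is `+1` iff `ν₂ d ≤ ν₂ k`. When `ν₂ d₁ = ν₂ d₂` these prescriptions agree on the
common indices (those with `[d₁,d₂] ∣ 2k`), so the two failure events together fix
`⌊n(2,d₁)/d₁⌋ + ⌊n(2,d₂)/d₂⌋ - ⌊n(2,[d₁,d₂])/[d₁,d₂]⌋` independent fair signs, and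
inclusion–exclusion gives the formula.
-/

open MeasureTheory ProbabilityTheory

open Finset

theorem Nat.dvd_mul_iff_div_gcd_dvd {a d k : ℕ} (ha : 0 < a) :
    d ∣ a * k ↔ d / Nat.gcd a d ∣ k := by
  have hg : 0 < Nat.gcd a d := Nat.gcd_pos_of_pos_left d ha
  have hcop := Nat.coprime_div_gcd_div_gcd hg
  obtain ⟨a', ha'⟩ := Nat.gcd_dvd_left a d
  obtain ⟨d', hd'⟩ := Nat.gcd_dvd_right a d
  set g := Nat.gcd a d
  rw [ha', Nat.mul_div_cancel_left _ hg] at hcop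
  rw [hd', Nat.mul_div_cancel_left _ hg] at hcop ⊢
  rw [ha', mul_assoc, Nat.mul_dvd_mul_iff_left hg]
  exact hcop.symm.dvd_mul_left

theorem Nat.dvd_iff_padicValNat_le_of_dvd_two_mul {d k : ℕ} (hk : k ≠ 0) (h : d ∣ 2 * k) :
    d ∣ k ↔ padicValNat 2 d ≤ padicValNat 2 k := by
  refine ⟨fun hdk => (padicValNat_dvd_iff_le hk).mp (pow_padicValNat_dvd.trans hdk), fun hle => ?_⟩
  have hd : d ≠ 0 := by rintro rfl; simp_all
  obtain ⟨v, m, hm, rfl⟩ := Nat.exists_eq_two_pow_mul_odd hd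
  have hv : padicValNat 2 (2 ^ v * m) = v := by
    rw [padicValNat.mul (by positivity) hm.pos.ne', padicValNat.prime_pow,
      padicValNat.eq_zero_of_not_dvd hm.not_two_dvd_nat, add_zero]
  rw [hv] at hle
  have hm2 : Nat.Coprime 2 m := Nat.coprime_two_left.mpr hm
  have hmk : m ∣ k := hm2.symm.dvd_of_dvd_mul_left ((Dvd.intro_left _ rfl).trans h)
  exact (hm2.pow_left v).mul_dvd_of_dvd_of_dvd ((padicValNat_dvd_iff_le hk).mpr hle) hmk

def dvdTwoMulIndices (n d : ℕ) : Finset ℕ := {k ∈ Icc 1 n | d ∣ 2 * k}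

lemma card_dvdTwoMulIndices (n d : ℕ) : #(dvdTwoMulIndices n d) = n * Nat.gcd 2 d / d := by
  have hcongr : dvdTwoMulIndices n d = {k ∈ Ioc 0 n | d / Nat.gcd 2 d ∣ k} :=
    filter_congr fun _ _ => Nat.dvd_mul_iff_div_gcd_dvd two_pos
  have hg : 0 < Nat.gcd 2 d := Nat.gcd_pos_of_pos_left d two_pos
  set g := Nat.gcd 2 d
  obtain ⟨d', hd'⟩ : g ∣ d := Nat.gcd_dvd_right 2 d
  rw [hcongr, Nat.Ioc_filter_dvd_card_eq_div, hd', Nat.mul_div_cancel_left _ hg, mul_comm _ d',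
    Nat.mul_div_mul_right _ _ hg]

lemma dvdTwoMulIndices_inter (n d₁ d₂ : ℕ) :
    dvdTwoMulIndices n d₁ ∩ dvdTwoMulIndices n d₂ = dvdTwoMulIndices n (Nat.lcm d₁ d₂) := by
  simp only [dvdTwoMulIndices, ← filter_and, Nat.lcm_dvd_iff]

/-- `forcedSign (ν₂ d) k`, for `d ∣ 2k`: the value of `s_k` that keeps `d` out of `D^{(s_k)}(k)`. -/
def forcedSign (v k : ℕ) : ℤ := if v ≤ padicValNat 2 k then 1 else -1

lemma forcedSign_eq_one_or_eq_neg_one (v k : ℕ) : forcedSign v k = 1 ∨ forcedSign v k = -1 := by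
  unfold forcedSign; split_ifs <;> simp

lemma ite_dvd_iff_ne_forcedSign {d k : ℕ} {σ : ℤ} (hk : k ≠ 0) (hσ : σ = -1 ∨ σ = 1) :
    (if σ = -1 then d ∣ k else d ∣ 2 * k ∧ ¬ d ∣ k) ↔
      d ∣ 2 * k ∧ σ ≠ forcedSign (padicValNat 2 d) k := by
  by_cases h2k : d ∣ 2 * k
  · simp only [forcedSign, ← Nat.dvd_iff_padicValNat_le_of_dvd_two_mul hk h2k]
    rcases hσ with rfl | rfl <;> by_cases hdk : d ∣ k <;> simp [hdk, h2k]
  · have hdk : ¬ d ∣ k := fun h => h2k (h.mul_left 2)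
    rcases hσ with rfl | rfl <;> simp [hdk, h2k]

lemma not_memL_iff {Ω : Type*} {s : ℕ → Ω → ℤ} (hrange : ∀ k ω, s k ω = -1 ∨ s k ω = 1)
    (n d : ℕ) (ω : Ω) :
    ¬ memL s n d ω ↔ ∀ k ∈ dvdTwoMulIndices n d, s k ω = forcedSign (padicValNat 2 d) k := by
  simp only [memL, dvdTwoMulIndices, mem_filter, not_exists, not_and, and_imp]
  refine forall_congr' fun k => forall_congr' fun hk => ?_
  have hk0 : k ≠ 0 := by have := (mem_Icc.mp hk).1; omega
  rw [ite_dvd_iff_ne_forcedSign hk0 (hrange k ω)]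
  tauto

section SignEvents

variable {Ω ι : Type*} [MeasurableSpace Ω] {μ : Measure Ω} {s : ι → Ω → ℤ}

lemma measure_preimage_singleton_eq_half [IsProbabilityMeasure μ] (hmeas : ∀ k, Measurable (s k))
    (hrange : ∀ k ω, s k ω = -1 ∨ s k ω = 1) (hunif : ∀ k, μ {ω | s k ω = 1} = 1 / 2) (k : ι)
    {σ : ℤ} (hσ : σ = 1 ∨ σ = -1) :
    μ (s k ⁻¹' {σ}) = 1 / 2 := by
  rcases hσ with rfl | rfl
  · exact hunif k
  · have hcompl : s k ⁻¹' {-1} = (s k ⁻¹' {1})ᶜ := by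
      ext ω; rcases hrange k ω with h | h <;> simp [h]
    rw [hcompl, prob_compl_eq_one_sub (hmeas k (measurableSet_singleton 1)),
      show μ (s k ⁻¹' {1}) = 1 / 2 from hunif k, one_div, ENNReal.one_sub_inv_two]

lemma measureReal_forall_mem_eq [IsProbabilityMeasure μ] (hmeas : ∀ k, Measurable (s k))
    (hrange : ∀ k ω, s k ω = -1 ∨ s k ω = 1) (hindep : iIndepFun s μ)
    (hunif : ∀ k, μ {ω | s k ω = 1} = 1 / 2) (F : Finset ι) {σ : ι → ℤ}
    (hσ : ∀ k, σ k = 1 ∨ σ k = -1) :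
    μ.real {ω | ∀ k ∈ F, s k ω = σ k} = (1 / 2) ^ #F := by
  have hset : {ω | ∀ k ∈ F, s k ω = σ k} = ⋂ k ∈ F, s k ⁻¹' {σ k} := by
    ext ω; simp
  rw [measureReal_def, hset, hindep.meas_biInter fun k _ => ⟨{σ k}, measurableSet_singleton _, rfl⟩,
    prod_congr rfl fun k _ => measure_preimage_singleton_eq_half hmeas hrange hunif k (hσ k),
    prod_const, ENNReal.toReal_pow]
  norm_num

lemma measurableSet_forall_mem_eq (hmeas : ∀ k, Measurable (s k)) (F : Finset ι) (σ : ι → ℤ) :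
    MeasurableSet {ω | ∀ k ∈ F, s k ω = σ k} := by
  simp only [Set.ofPred_forall]
  exact F.measurableSet_biInter fun k _ => measurableSet_eq_fun (hmeas k) measurable_const

end SignEvents

lemma probReal_compl_union {Ω : Type*} [MeasurableSpace Ω] {μ : Measure Ω}
    [IsProbabilityMeasure μ] {A B : Set Ω} (hA : MeasurableSet A) (hB : MeasurableSet B) :
    μ.real (A ∪ B)ᶜ = 1 - μ.real A - μ.real B + μ.real (A ∩ B) := by
  rw [probReal_compl_eq_one_sub (hA.union hB)]
  linarith [measureReal_union_add_inter (s := A) hB (μ := μ)]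

theorem stmt_12_general {Ω : Type*} [MeasurableSpace Ω] (μ : Measure Ω)
    [IsProbabilityMeasure μ] (s : ℕ → Ω → ℤ)
    (hmeas : ∀ k, Measurable (s k))
    (hrange : ∀ k ω, s k ω = -1 ∨ s k ω = 1)
    (hindep : iIndepFun s μ)
    (hunif : ∀ k, μ {ω | s k ω = 1} = 1 / 2)
    (n d₁ d₂ : ℕ)
    (hval : padicValNat 2 d₁ = padicValNat 2 d₂) :
    (μ {ω | memL s n d₁ ω ∧ memL s n d₂ ω}).toReal =
      1 - (1 / 2 : ℝ) ^ (n * Nat.gcd 2 d₁ / d₁)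
        - (1 / 2 : ℝ) ^ (n * Nat.gcd 2 d₂ / d₂)
        + (1 / 2 : ℝ) ^ (n * Nat.gcd 2 d₁ / d₁ + n * Nat.gcd 2 d₂ / d₂
            - n * Nat.gcd 2 (Nat.lcm d₁ d₂) / Nat.lcm d₁ d₂) := by
  set A : Finset ℕ → Set Ω := fun F => {ω | ∀ k ∈ F, s k ω = forcedSign (padicValNat 2 d₁) k}
  have hcompl : {ω | memL s n d₁ ω ∧ memL s n d₂ ω} =
      (A (dvdTwoMulIndices n d₁) ∪ A (dvdTwoMulIndices n d₂))ᶜ := by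
    ext ω
    have h₂ := not_memL_iff hrange n d₂ ω
    rw [← hval] at h₂
    simp only [A, Set.mem_ofPred_eq, Set.mem_compl_iff, Set.mem_union, ← not_memL_iff hrange, ← h₂]
    tauto
  have hinter (F G : Finset ℕ) : A F ∩ A G = A (F ∪ G) := by
    ext ω
    simp only [A, Set.mem_inter_iff, Set.mem_ofPred_eq, mem_union, or_imp, forall_and]
  have hprob (F : Finset ℕ) : μ.real (A F) = (1 / 2) ^ #F :=
    measureReal_forall_mem_eq hmeas hrange hindep hunif F (forcedSign_eq_one_or_eq_neg_one _)
  rw [← measureReal_def, hcompl, probReal_compl_union (measurableSet_forall_mem_eq hmeas _ _)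
    (measurableSet_forall_mem_eq hmeas _ _), hinter, hprob, hprob, hprob, card_union,
    dvdTwoMulIndices_inter, card_dvdTwoMulIndices, card_dvdTwoMulIndices, card_dvdTwoMulIndices]

theorem stmt_12 {Ω : Type*} [MeasurableSpace Ω] (μ : Measure Ω)
    [IsProbabilityMeasure μ] (s : ℕ → Ω → ℤ)
    (hmeas : ∀ k, Measurable (s k))
    (hrange : ∀ k ω, s k ω = -1 ∨ s k ω = 1)
    (hindep : iIndepFun s μ)
    (hunif : ∀ k, μ {ω | s k ω = 1} = 1 / 2)
    (n d₁ d₂ : ℕ) (hn : 1 ≤ n) (hd₁ : 1 ≤ d₁) (hd₂ : 1 ≤ d₂)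
    (hval : padicValNat 2 d₁ = padicValNat 2 d₂) :
    (μ {ω | memL s n d₁ ω ∧ memL s n d₂ ω}).toReal =
      1 - (1 / 2 : ℝ) ^ (n * Nat.gcd 2 d₁ / d₁)
        - (1 / 2 : ℝ) ^ (n * Nat.gcd 2 d₂ / d₂)
        + (1 / 2 : ℝ) ^ (n * Nat.gcd 2 d₁ / d₁ + n * Nat.gcd 2 d₂ / d₂
            - n * Nat.gcd 2 (Nat.lcm d₁ d₂) / Nat.lcm d₁ d₂) :=
  stmt_12_general μ s hmeas hrange hindep hunif n d₁ d₂ hval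
end

section
/- ∑_{n ≤ x} φ(n) · (1 − (1/2)^{⌊x/n⌋}) = (3/π²) · (1/2) · Li₂(1/2)/(1/2) · x² + O(x (log x)²) = (3/π²) · Li₂(1/2) · x² + O(x (log x)²) for every x ≥ 2, where Li₂(z) = ∑_{k≥1} z^k/k². -/
/-!
Writing `1 - 2^{-m} = ∑_{k=1}^{m} 2^{-k}` and exchanging the order of summation turns the sum
into `∑_{k ≤ x} 2^{-k} Φ(x/k)`, where `Φ(y) = ∑_{n ≤ y} φ(n)`. Möbius inversion
`φ = μ * id` gives `Φ(y) = ∑_{d ≤ y} μ(d) ⌊y/d⌋(⌊y/d⌋+1)/2 = (3/π²) y² + O(y log y)`, using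
`∑ μ(d)/d² = 1/ζ(2) = 6/π²`. Since `∑ 2^{-k} ≤ 1`, the errors add up to `O(x log x)`, while the
main terms give `(3/π²) x² ∑_{k ≤ x} 2^{-k}/k²`, which differs from `(3/π²) Li₂(1/2) x²` by
`O(x)` because both tails `∑_{n > N} μ(n)/n²` and `∑_{k > N} 2^{-k}/k²` are at most `1/N`.
-/

open Finset Real
open ArithmeticFunction hiding log
open scoped ArithmeticFunction.Moebius Nat

lemma tsum_inv_sq_nat_add_le {N : ℕ} (hN : N ≠ 0) :
    ∑' n : ℕ, (((n + (N + 1) : ℕ) : ℝ) ^ 2)⁻¹ ≤ (N : ℝ)⁻¹ := by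
  refine Real.tsum_le_of_sum_range_le (fun _ => by positivity) fun m => ?_
  calc ∑ i ∈ range m, (((i + (N + 1) : ℕ) : ℝ) ^ 2)⁻¹
      = ∑ i ∈ Ioc N (N + m), ((i : ℝ) ^ 2)⁻¹ := by
        rw [range_eq_Ico, sum_Ico_add' (fun i : ℕ => ((i : ℝ) ^ 2)⁻¹), zero_add,
          ← Icc_add_one_left_eq_Ioc, ← Ico_add_one_right_eq_Icc,
          show m + (N + 1) = N + m + 1 by omega]
    _ ≤ (N : ℝ)⁻¹ - ((N + m : ℕ) : ℝ)⁻¹ := sum_Ioc_inv_sq_le_sub hN (by omega)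
    _ ≤ (N : ℝ)⁻¹ := sub_le_self _ (by positivity)

lemma summable_of_abs_le_inv_sq {f : ℕ → ℝ} (hf : ∀ n, |f n| ≤ ((n : ℝ) ^ 2)⁻¹) :
    Summable f :=
  .of_norm_bounded (Real.summable_nat_pow_inv.mpr one_lt_two) hf

lemma abs_tsum_sub_sum_Icc_le_of_abs_le_inv_sq {f : ℕ → ℝ}
    (hf : ∀ n, |f n| ≤ ((n : ℝ) ^ 2)⁻¹) {N : ℕ} (hN : N ≠ 0) :
    |∑' n, f n - ∑ n ∈ Icc 1 N, f n| ≤ (N : ℝ)⁻¹ := by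
  -- `hf 0` forces `f 0 = 0`, because `(0 ^ 2)⁻¹ = 0`.
  have hf0 : f 0 = 0 := abs_nonpos_iff.mp (by simpa using hf 0)
  have hhead : ∑ n ∈ range (N + 1), f n = ∑ n ∈ Icc 1 N, f n := by
    rw [range_eq_Ico, sum_eq_sum_Ico_succ_bot (by omega : 0 < N + 1), hf0, zero_add,
      Ico_add_one_right_eq_Icc]
  rw [← (summable_of_abs_le_inv_sq hf).sum_add_tsum_nat_add (N + 1), hhead, add_sub_cancel_left]
  have htail : Summable fun n : ℕ => (((n + (N + 1) : ℕ) : ℝ) ^ 2)⁻¹ :=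
    (summable_nat_add_iff (f := fun n : ℕ => ((n : ℝ) ^ 2)⁻¹) (N + 1)).mpr
      (Real.summable_nat_pow_inv.mpr one_lt_two)
  exact (tsum_of_norm_bounded htail.hasSum fun n =>
    (Real.norm_eq_abs _).trans_le (hf (n + (N + 1)))).trans (tsum_inv_sq_nat_add_le hN)

lemma abs_tsum_pow_div_sq_sub_sum_Icc_le {z : ℝ} (hz : |z| ≤ 1) {N : ℕ} (hN : N ≠ 0) :
    |∑' k : ℕ, z ^ (k + 1) / ((k : ℝ) + 1) ^ 2 - ∑ k ∈ Icc 1 N, z ^ k / (k : ℝ) ^ 2|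
      ≤ (N : ℝ)⁻¹ := by
  have hf (k : ℕ) : |z ^ k / (k : ℝ) ^ 2| ≤ ((k : ℝ) ^ 2)⁻¹ := by
    rw [abs_div, abs_pow, abs_of_nonneg (by positivity : (0 : ℝ) ≤ (k : ℝ) ^ 2), div_eq_mul_inv]
    exact mul_le_of_le_one_left (by positivity) (pow_le_one₀ (abs_nonneg z) hz)
  have hshift := (summable_of_abs_le_inv_sq hf).tsum_eq_zero_add
  push_cast at hshift
  simpa [hshift] using abs_tsum_sub_sum_Icc_le_of_abs_le_inv_sq hf hN

lemma tsum_moebius_div_sq : ∑' n : ℕ, (μ n : ℝ) / (n : ℝ) ^ 2 = 6 / π ^ 2 := by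
  have h2 : (1 : ℝ) < (2 : ℂ).re := by norm_num
  have hL : LSeries (fun n => (μ n : ℂ)) 2
      = ((∑' n : ℕ, (μ n : ℝ) / (n : ℝ) ^ 2 : ℝ) : ℂ) := by
    rw [LSeries, Complex.ofReal_tsum]
    refine tsum_congr fun n => ?_
    rcases eq_or_ne n 0 with rfl | hn
    · simp
    · rw [LSeries.term_of_ne_zero hn, show (2 : ℂ) = ((2 : ℕ) : ℂ) by norm_num,
        Complex.cpow_natCast]
      push_cast
      ring
  have h := LSeries_zeta_mul_Lseries_moebius h2
  rw [LSeries_zeta_eq_riemannZeta h2, riemannZeta_two, hL] at h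
  have hπ : π ^ 2 * ∑' n : ℕ, (μ n : ℝ) / (n : ℝ) ^ 2 = 6 := by
    have : (π : ℂ) ^ 2 * ((∑' n : ℕ, (μ n : ℝ) / (n : ℝ) ^ 2 : ℝ) : ℂ) = 6 := by
      linear_combination 6 * h
    exact_mod_cast this
  rw [eq_div_iff (by positivity)]
  linarith

lemma abs_sum_Icc_moebius_div_sq_sub_le {N : ℕ} (hN : N ≠ 0) :
    |∑ n ∈ Icc 1 N, (μ n : ℝ) / (n : ℝ) ^ 2 - 6 / π ^ 2| ≤ (N : ℝ)⁻¹ := by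
  have hμ (n : ℕ) : |(μ n : ℝ) / (n : ℝ) ^ 2| ≤ ((n : ℝ) ^ 2)⁻¹ := by
    rw [abs_div, abs_of_nonneg (by positivity : (0 : ℝ) ≤ (n : ℝ) ^ 2), div_eq_mul_inv]
    exact mul_le_of_le_one_left (by positivity) (by exact_mod_cast abs_moebius_le_one)
  rw [abs_sub_comm, ← tsum_moebius_div_sq]
  exact abs_tsum_sub_sum_Icc_le_of_abs_le_inv_sq hμ hN

lemma totient_eq_moebius_mul_id (n : ℕ) :
    (φ n : ℝ)
      = ((μ : ArithmeticFunction ℝ) * (ArithmeticFunction.id : ArithmeticFunction ℝ)) n := by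
  rcases eq_or_ne n 0 with rfl | hn
  · simp
  rw [mul_apply]
  refine ((sum_eq_iff_sum_mul_moebius_eq (f := fun d => (φ d : ℝ)) (g := fun d => (d : ℝ))).mp
    (fun m _ => by exact_mod_cast m.sum_totient) n (Nat.pos_of_ne_zero hn)).symm.trans ?_
  simp only [intCoe_apply, natCoe_apply, id_apply]

lemma sum_Ioc_natCast (K : ℕ) : ∑ m ∈ Ioc 0 K, (m : ℝ) = K * (K + 1) / 2 := by
  induction K with
  | zero => simp
  | succ K ih =>
    rw [sum_Ioc_succ_top K.zero_le, ih]
    push_cast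
    ring

lemma sum_Icc_totient_eq_sum_moebius (N : ℕ) :
    ∑ n ∈ Icc 1 N, (φ n : ℝ)
      = ∑ d ∈ Icc 1 N, (μ d : ℝ) * ((N / d : ℕ) * ((N / d : ℕ) + 1 : ℝ) / 2) := by
  rw [show Icc 1 N = Ioc 0 N from Icc_add_one_left_eq_Ioc 0 N]
  simp_rw [totient_eq_moebius_mul_id, sum_Ioc_mul_eq_sum_sum, intCoe_apply, natCoe_apply,
    id_apply, sum_Ioc_natCast]

lemma abs_floor_mul_floor_add_one_sub_sq_le {r : ℝ} (hr : 0 ≤ r) :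
    |(⌊r⌋₊ : ℝ) * (⌊r⌋₊ + 1) - r ^ 2| ≤ r := by
  have h₁ := Nat.floor_le hr
  have h₂ := Nat.lt_floor_add_one r
  rw [abs_le]
  constructor <;> nlinarith

lemma sum_Icc_inv_le_log_add_one (N : ℕ) : ∑ d ∈ Icc 1 N, (d : ℝ)⁻¹ ≤ log N + 1 := by
  have h := harmonic_le_one_add_log N
  rw [harmonic_eq_sum_Icc] at h
  push_cast at h
  linarith

theorem abs_sum_totient_sub_le {y : ℝ} (hy : 1 ≤ y) :
    |∑ n ∈ Icc 1 ⌊y⌋₊, (φ n : ℝ) - 3 / π ^ 2 * y ^ 2| ≤ y * (log y + 3) / 2 := by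
  set N := ⌊y⌋₊
  have hN : N ≠ 0 := (Nat.floor_pos.mpr hy).ne'
  have hNy : (N : ℝ) ≤ y := Nat.floor_le (by linarith)
  have hyN : y < N + 1 := Nat.lt_floor_add_one y
  have hN1 : (1 : ℝ) ≤ N := by exact_mod_cast Nat.one_le_iff_ne_zero.mpr hN
  have hdecomp : ∑ n ∈ Icc 1 N, (φ n : ℝ) - 3 / π ^ 2 * y ^ 2
      = ∑ d ∈ Icc 1 N, (μ d : ℝ) * (((⌊y / d⌋₊ : ℝ) * (⌊y / d⌋₊ + 1) - (y / d) ^ 2) / 2)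
        + y ^ 2 / 2 * (∑ d ∈ Icc 1 N, (μ d : ℝ) / (d : ℝ) ^ 2 - 6 / π ^ 2) := by
    simp_rw [sum_Icc_totient_eq_sum_moebius, Nat.floor_div_natCast, mul_sub, sub_div, mul_sub,
      mul_sum, sum_sub_distrib]
    have (d : ℕ) : (μ d : ℝ) * ((y / d) ^ 2 / 2) = y ^ 2 / 2 * ((μ d : ℝ) / (d : ℝ) ^ 2) := by
      ring
    simp_rw [this]
    ring
  have hfloor : |∑ d ∈ Icc 1 N,
      (μ d : ℝ) * (((⌊y / d⌋₊ : ℝ) * (⌊y / d⌋₊ + 1) - (y / d) ^ 2) / 2)|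
      ≤ y * (log y + 1) / 2 := by
    calc _ ≤ ∑ d ∈ Icc 1 N, y / d / 2 := by
          refine (abs_sum_le_sum_abs _ _).trans (sum_le_sum fun d _ => ?_)
          rw [abs_mul, abs_div, abs_two]
          refine (mul_le_of_le_one_left (by positivity)
            (by exact_mod_cast abs_moebius_le_one)).trans ?_
          have := abs_floor_mul_floor_add_one_sub_sq_le (r := y / d) (by positivity)
          linarith
      _ = y / 2 * ∑ d ∈ Icc 1 N, (d : ℝ)⁻¹ := by
          rw [mul_sum]
          exact sum_congr rfl fun d _ => by ring
      _ ≤ y / 2 * (log y + 1) := by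
          gcongr
          exact (sum_Icc_inv_le_log_add_one N).trans (by gcongr)
      _ = y * (log y + 1) / 2 := by ring
  have hzeta : |y ^ 2 / 2 * (∑ d ∈ Icc 1 N, (μ d : ℝ) / (d : ℝ) ^ 2 - 6 / π ^ 2)| ≤ y := by
    rw [abs_mul, abs_of_nonneg (by positivity)]
    calc y ^ 2 / 2 * _ ≤ y ^ 2 / 2 * (N : ℝ)⁻¹ := by
          gcongr
          exact abs_sum_Icc_moebius_div_sq_sub_le hN
      _ ≤ y := by
          rw [mul_inv_le_iff₀ (by positivity)]
          nlinarith
  rw [hdecomp]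
  calc _ ≤ _ := abs_add_le _ _
    _ ≤ y * (log y + 1) / 2 + y := add_le_add hfloor hzeta
    _ = y * (log y + 3) / 2 := by ring

lemma abs_sum_totient_floor_div_sub_le {x : ℝ} {k : ℕ} (hk : 1 ≤ k) (hkx : (k : ℝ) ≤ x) :
    |∑ n ∈ Icc 1 ⌊x / k⌋₊, (φ n : ℝ) - 3 / π ^ 2 * (x / k) ^ 2| ≤ x * (log x + 3) / 2 := by
  have hk : (1 : ℝ) ≤ k := by exact_mod_cast hk
  have hxk : 1 ≤ x / k := (one_le_div (by positivity)).mpr hkx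
  have hxk' : x / k ≤ x := div_le_self (by linarith) hk
  have hlog : 0 ≤ log (x / k) := Real.log_nonneg hxk
  refine (abs_sum_totient_sub_le hxk).trans ?_
  gcongr
  linarith

lemma sum_Icc_mul_sum_Icc_div_comm {R : Type*} [CommSemiring R] (f g : ℕ → R) (M : ℕ) :
    ∑ n ∈ Icc 1 M, f n * ∑ k ∈ Icc 1 (M / n), g k
      = ∑ k ∈ Icc 1 M, g k * ∑ n ∈ Icc 1 (M / k), f n := by
  simp_rw [mul_sum]
  refine (sum_comm' fun n k => ?_).trans
    (sum_congr rfl fun k _ => sum_congr rfl fun n _ => mul_comm _ _)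
  simp only [mem_Icc]
  constructor
  · rintro ⟨⟨hn, hnM⟩, hk, hkn⟩
    have := (Nat.le_div_iff_mul_le hn).mp hkn
    exact ⟨⟨hn, (Nat.le_div_iff_mul_le hk).mpr (by linarith)⟩, hk, by nlinarith⟩
  · rintro ⟨⟨hn, hnk⟩, hk, hkM⟩
    have := (Nat.le_div_iff_mul_le hk).mp hnk
    exact ⟨⟨hn, by nlinarith⟩, hk, (Nat.le_div_iff_mul_le hn).mpr (by linarith)⟩

lemma sum_Icc_half_pow (m : ℕ) : ∑ k ∈ Icc 1 m, (1 / 2 : ℝ) ^ k = 1 - (1 / 2) ^ m := by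
  induction m with
  | zero => simp
  | succ m ih =>
    rw [sum_Icc_succ_top (by omega), ih, pow_succ]
    ring

lemma sum_totient_mul_one_sub_half_pow_floor (x : ℝ) :
    ∑ n ∈ Icc 1 ⌊x⌋₊, (φ n : ℝ) * (1 - (1 / 2 : ℝ) ^ ⌊x / n⌋₊)
      = ∑ k ∈ Icc 1 ⌊x⌋₊, (1 / 2 : ℝ) ^ k * ∑ n ∈ Icc 1 ⌊x / k⌋₊, (φ n : ℝ) := by
  simp_rw [Nat.floor_div_natCast, ← sum_Icc_half_pow]
  exact sum_Icc_mul_sum_Icc_div_comm _ _ _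

lemma abs_sum_half_pow_mul_sum_totient_sub_le {x : ℝ} (hx : 1 ≤ x) :
    |∑ k ∈ Icc 1 ⌊x⌋₊, (1 / 2 : ℝ) ^ k * ∑ n ∈ Icc 1 ⌊x / k⌋₊, (φ n : ℝ)
      - 3 / π ^ 2 * x ^ 2 * ∑ k ∈ Icc 1 ⌊x⌋₊, (1 / 2 : ℝ) ^ k / (k : ℝ) ^ 2|
      ≤ x * (log x + 3) / 2 := by
  have hterm : ∀ k ∈ Icc 1 ⌊x⌋₊,
      |(1 / 2 : ℝ) ^ k * ∑ n ∈ Icc 1 ⌊x / k⌋₊, (φ n : ℝ)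
        - 3 / π ^ 2 * x ^ 2 * ((1 / 2 : ℝ) ^ k / (k : ℝ) ^ 2)|
      ≤ (1 / 2 : ℝ) ^ k * (x * (log x + 3) / 2) := by
    intro k hk
    obtain ⟨hk1, hkx⟩ := mem_Icc.mp hk
    rw [show 3 / π ^ 2 * x ^ 2 * ((1 / 2 : ℝ) ^ k / (k : ℝ) ^ 2)
        = (1 / 2 : ℝ) ^ k * (3 / π ^ 2 * (x / k) ^ 2) by ring,
      ← mul_sub, abs_mul, abs_of_nonneg (by positivity)]
    gcongr
    exact abs_sum_totient_floor_div_sub_le hk1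
      ((Nat.cast_le.mpr hkx).trans (Nat.floor_le (by linarith)))
  rw [mul_sum, ← sum_sub_distrib]
  refine (abs_sum_le_sum_abs _ _).trans ((sum_le_sum hterm).trans ?_)
  rw [← sum_mul, sum_Icc_half_pow]
  refine mul_le_of_le_one_left (by positivity [Real.log_nonneg hx]) ?_
  have : (0 : ℝ) ≤ (1 / 2) ^ ⌊x⌋₊ := by positivity
  linarith

theorem stmt_18 :
    ∃ C : ℝ, 0 < C ∧ ∀ x : ℝ, 2 ≤ x →
      |(∑ n ∈ Finset.Icc 1 ⌊x⌋₊,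
          (Nat.totient n : ℝ) * (1 - (1 / 2 : ℝ) ^ ⌊x / (n : ℝ)⌋₊)) -
        (3 / Real.pi ^ 2) *
          (∑' k : ℕ, (1 / 2 : ℝ) ^ (k + 1) / ((k : ℝ) + 1) ^ 2) * x ^ 2|
        ≤ C * x * (Real.log x) ^ 2 := by
  refine ⟨10, by norm_num, fun x hx => ?_⟩
  set M := ⌊x⌋₊
  have hM : M ≠ 0 := (Nat.floor_pos.mpr (by linarith)).ne'
  have hxM : x ≤ 2 * M := by
    have : (1 : ℝ) ≤ M := by exact_mod_cast Nat.one_le_iff_ne_zero.mpr hM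
    linarith [Nat.lt_floor_add_one x]
  have hπ : 3 / π ^ 2 ≤ 1 := by
    rw [div_le_one (by positivity)]
    nlinarith [pi_gt_three]
  set L := ∑' k : ℕ, (1 / 2 : ℝ) ^ (k + 1) / ((k : ℝ) + 1) ^ 2
  set P := ∑ k ∈ Icc 1 M, (1 / 2 : ℝ) ^ k / (k : ℝ) ^ 2
  have htail : |3 / π ^ 2 * x ^ 2 * P - 3 / π ^ 2 * L * x ^ 2| ≤ 2 * x := by
    rw [show 3 / π ^ 2 * x ^ 2 * P - 3 / π ^ 2 * L * x ^ 2 = 3 / π ^ 2 * x ^ 2 * (P - L) by ring,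
      abs_mul, abs_of_nonneg (by positivity), abs_sub_comm]
    calc _ ≤ 1 * x ^ 2 * (M : ℝ)⁻¹ := by
          gcongr
          exact abs_tsum_pow_div_sq_sub_sum_Icc_le (by norm_num [abs_of_pos]) hM
      _ ≤ 2 * x := by
          rw [one_mul, mul_inv_le_iff₀ (by positivity)]
          nlinarith
  have hlog : 0.69 ≤ log x := by linarith [log_two_gt_d9, Real.log_le_log two_pos hx]
  have hlog_sq : (log x + 3) / 2 + 2 ≤ 10 * log x ^ 2 := by nlinarith
  rw [sum_totient_mul_one_sub_half_pow_floor]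
  calc _ ≤ x * (log x + 3) / 2 + 2 * x :=
        (abs_sub_le _ _ _).trans
          (add_le_add (abs_sum_half_pow_mul_sum_totient_sub_le (by linarith)) htail)
    _ ≤ 10 * x * log x ^ 2 := by
        nlinarith [mul_le_mul_of_nonneg_left hlog_sq (by linarith : 0 ≤ x)]
end
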